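/- Let δ be a labelled Markov process on a finite state space S. For every metric bisimulation d, d = L(R(d)) and R(d) is contained in the greatest graded bisimulation; hence the greatest metric bisimulation d* (the pointwise infimum over all metric bisimulations) satisfies d* = L(A*), where A* is the greatest graded bisimulation. -/
import Mathlib


/-- `d` is a 1-bounded pseudometric on `X`. -/
def IsPMet1 {X : Type*} (d : X → X → ℝ) : Prop :=
  (∀ x y, 0 ≤ d x y) ∧ (∀ x y, d x y ≤ 1) ∧ (∀ x, d x x = 0) ∧
  (∀ x y, d x y = d y x) ∧ (∀ x y z, d x z ≤ d x y + d y z)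

/-- `A` is a lax monoidal `[0,1]`-graded relation: monotone in the grade,
the diagonal is contained in `A 0`, and composition is bounded via truncated
addition `min 1 (r + r')`. -/
def IsIRel {X : Type*} (A : ℝ → Set (X × X)) : Prop :=
  (∀ r r', r ∈ Set.Icc (0:ℝ) 1 → r' ∈ Set.Icc (0:ℝ) 1 → r ≤ r' → A r ⊆ A r') ∧
  (∀ x : X, (x, x) ∈ A 0) ∧
  (∀ r r', r ∈ Set.Icc (0:ℝ) 1 → r' ∈ Set.Icc (0:ℝ) 1 →
    {p : X × X | ∃ z, (p.1, z) ∈ A r ∧ (z, p.2) ∈ A r'} ⊆ A (min 1 (r + r')))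

/-- `L(A)(x,y) = inf {r ∈ [0,1] | (x,y) ∈ A r}`, with the infimum of the empty
set taken to be `1`. -/
noncomputable def Lmap {X : Type*} (A : ℝ → Set (X × X)) (x y : X) : ℝ :=
  sInf ({r | r ∈ Set.Icc (0:ℝ) 1 ∧ (x, y) ∈ A r} ∪ {1})

/-- `R(d)_r` is the closed-ball relation `{(x,y) | d x y ≤ r}`. -/
def Rmap {X : Type*} (d : X → X → ℝ) (r : ℝ) : Set (X × X) :=
  {p | d p.1 p.2 ≤ r}

/-- Mass assigned by `f : S → ℝ` to a set `X ⊆ S` (finite state space). -/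
noncomputable def fmass {S : Type*} [Fintype S] (f : S → ℝ) (X : Set S) : ℝ :=
  ∑ x : S, X.indicator f x

/-- Image of a set under a relation. -/
def relImg {S : Type*} (R : Set (S × S)) (X : Set S) : Set S :=
  {y | ∃ x ∈ X, (x, y) ∈ R}

/-- `f` is a labelled subdistribution on the finite set `S`. -/
def IsSubdist {S A : Type*} [Fintype S] (f : A → S → ℝ) : Prop :=
  (∀ a x, 0 ≤ f a x) ∧ ∀ a, (∑ x : S, f a x) ≤ 1

/-- The Lévy–Prokhorov lifting (with closed balls) of a pseudometric `d`. -/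
noncomputable def LPlift {S A : Type*} [Fintype S] (d : S → S → ℝ)
    (f₀ f₁ : A → S → ℝ) : ℝ :=
  sInf ({r | r ∈ Set.Icc (0:ℝ) 1 ∧ ∀ (a : A) (X : Set S),
      fmass (f₀ a) X ≤ fmass (f₁ a) (relImg (Rmap d r) X) + r ∧
      fmass (f₁ a) X ≤ fmass (f₀ a) (relImg (Rmap d r) X) + r} ∪ {1})

/-- `d` is a metric bisimulation on the LMP `δ`. -/
def IsMetBisim {S A : Type*} [Fintype S] (δ : S → A → S → ℝ) (d : S → S → ℝ) : Prop :=
  IsPMet1 d ∧ ∀ x y : S, LPlift d (fun a => δ x a) (fun a => δ y a) ≤ d x y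

/-- `B` is a graded relational bisimulation on the LMP `δ`: a grade-monotone
family of ε-bisimulations. -/
def IsGradedBisimLMP {S A : Type*} [Fintype S] (δ : S → A → S → ℝ)
    (B : ℝ → Set (S × S)) : Prop :=
  (∀ r r', r ∈ Set.Icc (0:ℝ) 1 → r' ∈ Set.Icc (0:ℝ) 1 → r ≤ r' → B r ⊆ B r') ∧
  ∀ r ∈ Set.Icc (0:ℝ) 1, ∀ x y : S, (x, y) ∈ B r → ∀ (a : A) (X : Set S),
    fmass (δ x a) X ≤ fmass (δ y a) (relImg (B r) X) + r ∧
    fmass (δ y a) X ≤ fmass (δ x a) (relImg (B r) X) + r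

/-- The greatest graded relational bisimulation: componentwise union. -/
def gradedBisimilarity {S A : Type*} [Fintype S] (δ : S → A → S → ℝ)
    (r : ℝ) : Set (S × S) :=
  {p | ∃ B : ℝ → Set (S × S), IsGradedBisimLMP δ B ∧ p ∈ B r}

/-- The greatest metric bisimulation: pointwise infimum of all metric bisimulations. -/
noncomputable def metBisimilarity {S A : Type*} [Fintype S] (δ : S → A → S → ℝ)
    (x y : S) : ℝ :=
  sInf {t | ∃ d : S → S → ℝ, IsMetBisim δ d ∧ t = d x y}

set_option linter.unusedSectionVars false
section Aux
variable {S A : Type*} [Fintype S]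

lemma fmass_nonneg {f : S → ℝ} (hf : ∀ x, 0 ≤ f x) (X : Set S) : 0 ≤ fmass f X :=
  Finset.sum_nonneg fun x _ => Set.indicator_nonneg (fun y _ => hf y) x

lemma fmass_mono {f : S → ℝ} (hf : ∀ x, 0 ≤ f x) {X Y : Set S} (h : X ⊆ Y) :
    fmass f X ≤ fmass f Y :=
  Finset.sum_le_sum fun x _ => Set.indicator_le_indicator_of_subset h hf x

lemma fmass_le_one {f : S → ℝ} (hf : ∀ x, 0 ≤ f x) (h1 : ∑ x : S, f x ≤ 1) (X : Set S) :
    fmass f X ≤ 1 :=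
  (Finset.sum_le_sum fun x _ => Set.indicator_le_self' (fun y _ => hf y) x).trans h1

lemma relImg_mono {R R' : Set (S × S)} (h : R ⊆ R') (X : Set S) :
    relImg R X ⊆ relImg R' X := by
  rintro y ⟨x, hx, hxy⟩; exact ⟨x, hx, h hxy⟩

lemma Lmap_bddBelow {X : Type*} (A : ℝ → Set (X × X)) (x y : X) :
    BddBelow ({r | r ∈ Set.Icc (0:ℝ) 1 ∧ (x, y) ∈ A r} ∪ {1}) := by
  refine ⟨0, ?_⟩
  rintro r (⟨⟨h0, _⟩, _⟩ | rfl)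
  · exact h0
  · norm_num

lemma Lmap_nonneg {X : Type*} (A : ℝ → Set (X × X)) (x y : X) : 0 ≤ Lmap A x y := by
  apply le_csInf ⟨(1:ℝ), Or.inr rfl⟩
  rintro r (⟨⟨h0, _⟩, _⟩ | rfl)
  · exact h0
  · norm_num

lemma Lmap_le_one {X : Type*} (A : ℝ → Set (X × X)) (x y : X) : Lmap A x y ≤ 1 :=
  csInf_le (Lmap_bddBelow A x y) (Or.inr rfl)

lemma Lmap_le_of_mem {X : Type*} (A : ℝ → Set (X × X)) {x y : X} {r : ℝ}
    (hr : r ∈ Set.Icc (0:ℝ) 1) (h : (x, y) ∈ A r) : Lmap A x y ≤ r :=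
  csInf_le (Lmap_bddBelow A x y) (Or.inl ⟨hr, h⟩)

lemma gap_lemma (d : S → S → ℝ) {r : ℝ} (hr : r < 1) :
    ∃ ε > 0, r + ε ≤ 1 ∧ ∀ p : S × S, d p.1 p.2 < r + ε → d p.1 p.2 ≤ r := by
  classical
  set T : Finset (S × S) := Finset.univ.filter (fun p => r < d p.1 p.2) with hT
  rcases T.eq_empty_or_nonempty with hE | hNE
  · refine ⟨1 - r, by linarith, by linarith, fun p _ => ?_⟩
    by_contra hc
    have hpT : p ∈ T := Finset.mem_filter.mpr ⟨Finset.mem_univ _, lt_of_not_ge hc⟩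
    simp [hE] at hpT
  · set m := T.inf' hNE (fun p => d p.1 p.2) with hm
    have hml : r < m := by
      rw [Finset.lt_inf'_iff]
      intro p hp
      exact (Finset.mem_filter.mp hp).2
    refine ⟨min (1 - r) (m - r), lt_min (by linarith) (by linarith), ?_, ?_⟩
    · have := min_le_left (1 - r) (m - r); linarith
    · intro p hp
      by_contra hc
      have hpT : p ∈ T := Finset.mem_filter.mpr ⟨Finset.mem_univ _, lt_of_not_ge hc⟩
      have h1 : m ≤ d p.1 p.2 := Finset.inf'_le _ hpT
      have h2 := min_le_right (1 - r) (m - r)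
      linarith

end Aux

section Aux2
set_option linter.unusedSectionVars false
variable {S A : Type*} [Fintype S] (δ : S → A → S → ℝ)

lemma cond_triv (hδ : ∀ s, IsSubdist (fun a => δ s a)) {r : ℝ} (h1 : 1 ≤ r)
    (x y : S) (a : A) (X W : Set S) :
    fmass (δ x a) X ≤ fmass (δ y a) W + r := by
  have hx := fmass_le_one (fun z => (hδ x).1 a z) ((hδ x).2 a) X
  have hy := fmass_nonneg (fun z => (hδ y).1 a z) W
  linarith

lemma gb_mono {r r' : ℝ} (hr : r ∈ Set.Icc (0:ℝ) 1) (hr' : r' ∈ Set.Icc (0:ℝ) 1)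
    (h : r ≤ r') : gradedBisimilarity δ r ⊆ gradedBisimilarity δ r' := by
  rintro p ⟨B, hB, hp⟩
  exact ⟨B, hB, hB.1 r r' hr hr' h hp⟩

lemma gb_cond (hδ : ∀ s, IsSubdist (fun a => δ s a)) {r : ℝ}
    (hr : r ∈ Set.Icc (0:ℝ) 1) {x y : S} (h : (x, y) ∈ gradedBisimilarity δ r)
    (a : A) (X : Set S) :
    fmass (δ x a) X ≤ fmass (δ y a) (relImg (gradedBisimilarity δ r) X) + r ∧
    fmass (δ y a) X ≤ fmass (δ x a) (relImg (gradedBisimilarity δ r) X) + r := by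
  obtain ⟨B, hB, hp⟩ := h
  obtain ⟨h1, h2⟩ := hB.2 r hr x y hp a X
  have hsub : relImg (B r) X ⊆ relImg (gradedBisimilarity δ r) X :=
    relImg_mono (fun q hq => show q ∈ gradedBisimilarity δ r from ⟨B, hB, hq⟩) X
  constructor
  · exact h1.trans (add_le_add (fmass_mono (fun z => (hδ y).1 a z) hsub) le_rfl)
  · exact h2.trans (add_le_add (fmass_mono (fun z => (hδ x).1 a z) hsub) le_rfl)

lemma gb_one (hδ : ∀ s, IsSubdist (fun a => δ s a)) (p : S × S) :
    p ∈ gradedBisimilarity δ 1 := by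
  refine ⟨fun r => {q : S × S | (1:ℝ) ≤ r}, ⟨?_, ?_⟩, le_refl (1:ℝ)⟩
  · intro r r' _ _ hle q hq
    exact le_trans hq hle
  · intro r hr x y hxy a X
    exact ⟨cond_triv δ hδ hxy x y a X _, cond_triv δ hδ hxy y x a X _⟩

lemma gb_symm (hδ : ∀ s, IsSubdist (fun a => δ s a)) {r : ℝ} {x y : S}
    (h : (x, y) ∈ gradedBisimilarity δ r) : (y, x) ∈ gradedBisimilarity δ r := by
  obtain ⟨B, hB, hp⟩ := h
  refine ⟨fun t => B t ∪ {q : S × S | (q.2, q.1) ∈ B t}, ⟨?_, ?_⟩, Or.inr hp⟩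
  · rintro t t' ht ht' hle q (hq | hq)
    · exact Or.inl (hB.1 t t' ht ht' hle hq)
    · exact Or.inr (hB.1 t t' ht ht' hle hq)
  · intro t ht u v huv a X
    have hsub : relImg (B t) X ⊆ relImg (B t ∪ {q : S × S | (q.2, q.1) ∈ B t}) X :=
      relImg_mono Set.subset_union_left X
    rcases huv with huv | huv
    · obtain ⟨h1, h2⟩ := hB.2 t ht u v huv a X
      exact ⟨h1.trans (add_le_add (fmass_mono (fun z => (hδ v).1 a z) hsub) le_rfl),
             h2.trans (add_le_add (fmass_mono (fun z => (hδ u).1 a z) hsub) le_rfl)⟩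
    · obtain ⟨h1, h2⟩ := hB.2 t ht v u huv a X
      exact ⟨h2.trans (add_le_add (fmass_mono (fun z => (hδ v).1 a z) hsub) le_rfl),
             h1.trans (add_le_add (fmass_mono (fun z => (hδ u).1 a z) hsub) le_rfl)⟩

end Aux2

section Aux3
set_option linter.unusedSectionVars false
variable {S A : Type*} [Fintype S] (δ : S → A → S → ℝ)

lemma gb_comp (hδ : ∀ s, IsSubdist (fun a => δ s a)) {r r' : ℝ}
    (hr : r ∈ Set.Icc (0:ℝ) 1) (hr' : r' ∈ Set.Icc (0:ℝ) 1) {x y z : S}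
    (hxy : (x, y) ∈ gradedBisimilarity δ r) (hyz : (y, z) ∈ gradedBisimilarity δ r') :
    (x, z) ∈ gradedBisimilarity δ (min 1 (r + r')) := by
  classical
  by_cases h1 : 1 ≤ r + r'
  · rw [min_eq_left h1]
    exact gb_one δ hδ _
  push_neg at h1
  rw [min_eq_right h1.le]
  set C : Set (S × S) :=
    {p | ∃ w, (p.1, w) ∈ gradedBisimilarity δ r ∧ (w, p.2) ∈ gradedBisimilarity δ r'} with hC
  set Ct : Set (S × S) := {p | (p.2, p.1) ∈ C} with hCt
  have key : ∀ p ∈ C, ∀ (a : A) (X : Set S),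
      fmass (δ p.1 a) X ≤ fmass (δ p.2 a) (relImg C X) + (r + r') ∧
      fmass (δ p.2 a) X ≤ fmass (δ p.1 a) (relImg Ct X) + (r + r') := by
    rintro ⟨u, v⟩ ⟨w, huw, hwv⟩ a X
    constructor
    · have k1 := (gb_cond δ hδ hr huw a X).1
      have k2 := (gb_cond δ hδ hr' hwv a (relImg (gradedBisimilarity δ r) X)).1
      have hsub : relImg (gradedBisimilarity δ r') (relImg (gradedBisimilarity δ r) X)
          ⊆ relImg C X := by
        rintro c ⟨b, ⟨aa, haa, hab⟩, hbc⟩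
        exact ⟨aa, haa, ⟨b, hab, hbc⟩⟩
      have hm := fmass_mono (fun s => (hδ v).1 a s) hsub
      linarith
    · have k1 := (gb_cond δ hδ hr' hwv a X).2
      have k2 := (gb_cond δ hδ hr huw a (relImg (gradedBisimilarity δ r') X)).2
      have hsub : relImg (gradedBisimilarity δ r) (relImg (gradedBisimilarity δ r') X)
          ⊆ relImg Ct X := by
        rintro c ⟨b, ⟨aa, haa, hab⟩, hbc⟩
        exact ⟨aa, haa, show ((aa, c).2, (aa, c).1) ∈ C from
          ⟨b, gb_symm δ hδ hbc, gb_symm δ hδ hab⟩⟩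
      have hm := fmass_mono (fun s => (hδ u).1 a s) hsub
      linarith
  set F : ℝ → Set (S × S) :=
    fun t => gradedBisimilarity δ t ∪ (if r + r' ≤ t then C ∪ Ct else ∅) with hF
  have hCF : ∀ t, r + r' ≤ t → C ∪ Ct ⊆ F t := by
    intro t hle q hq
    rw [hF]
    right
    rw [if_pos hle]
    exact hq
  refine ⟨F, ⟨?_, ?_⟩, hCF (r + r') le_rfl (Or.inl ⟨y, hxy, hyz⟩)⟩
  · rintro t t' ht ht' hle q (hq | hq)
    · exact Or.inl (gb_mono δ ht ht' hle hq)
    · by_cases hc : r + r' ≤ t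
      · rw [if_pos hc] at hq
        exact hCF t' (hc.trans hle) hq
      · rw [if_neg hc] at hq
        exact absurd hq (Set.notMem_empty q)
  · intro t ht u v huv a X
    have hGsub : relImg (gradedBisimilarity δ t) X ⊆ relImg (F t) X :=
      relImg_mono Set.subset_union_left X
    rcases huv with huv | huv
    · obtain ⟨g1, g2⟩ := gb_cond δ hδ ht huv a X
      exact ⟨g1.trans (add_le_add (fmass_mono (fun s => (hδ v).1 a s) hGsub) le_rfl),
             g2.trans (add_le_add (fmass_mono (fun s => (hδ u).1 a s) hGsub) le_rfl)⟩
    · by_cases hc : r + r' ≤ t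
      swap
      · rw [if_neg hc] at huv
        exact absurd huv (Set.notMem_empty _)
      rw [if_pos hc] at huv
      have hCsub : relImg C X ⊆ relImg (F t) X :=
        relImg_mono (fun q hq => hCF t hc (Or.inl hq)) X
      have hCtsub : relImg Ct X ⊆ relImg (F t) X :=
        relImg_mono (fun q hq => hCF t hc (Or.inr hq)) X
      rcases huv with huv | huv
      · obtain ⟨k1, k2⟩ := key (u, v) huv a X
        exact ⟨k1.trans (add_le_add (fmass_mono (fun s => (hδ v).1 a s) hCsub) hc),
               k2.trans (add_le_add (fmass_mono (fun s => (hδ u).1 a s) hCtsub) hc)⟩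
      · obtain ⟨k1, k2⟩ := key (v, u) huv a X
        exact ⟨k2.trans (add_le_add (fmass_mono (fun s => (hδ v).1 a s) hCtsub) hc),
               k1.trans (add_le_add (fmass_mono (fun s => (hδ u).1 a s) hCsub) hc)⟩

end Aux3

def gbClosure {S A : Type*} [Fintype S] (δ : S → A → S → ℝ) (t : ℝ) : Set (S × S) :=
  {p | ∀ s, t < s → s ≤ 1 → p ∈ gradedBisimilarity δ s}

section Aux4
set_option linter.unusedSectionVars false
variable {S A : Type*} [Fintype S] (δ : S → A → S → ℝ)

lemma gbClosure_isBisim (hδ : ∀ s, IsSubdist (fun a => δ s a)) :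
    IsGradedBisimLMP δ (gbClosure δ) := by
  classical
  constructor
  · intro t t' _ _ hle p hp s hs hs1
    exact hp s (lt_of_le_of_lt hle hs) hs1
  · intro t ht u v huv a X
    rcases eq_or_lt_of_le ht.2 with h1 | h1
    · exact ⟨cond_triv δ hδ h1.ge u v a X _, cond_triv δ hδ h1.ge v u a X _⟩
    have hkey : ∃ s₀, t < s₀ ∧ s₀ ≤ 1 ∧
        ∀ s, t < s → s ≤ s₀ → gradedBisimilarity δ s ⊆ gbClosure δ t := by
      have hch : ∀ p : S × S, ∃ s, (t < s ∧ s ≤ 1) ∧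
          (p ∉ gbClosure δ t → p ∉ gradedBisimilarity δ s) := by
        intro p
        by_cases hp : p ∈ gbClosure δ t
        · exact ⟨1, ⟨h1, le_refl 1⟩, fun hc => absurd hp hc⟩
        · simp only [gbClosure, Set.mem_setOf_eq, not_forall] at hp
          obtain ⟨s, hs1, hs2, hs3⟩ := hp
          exact ⟨s, ⟨hs1, hs2⟩, fun _ => hs3⟩
      choose g hg1 hg2 using hch
      rcases isEmpty_or_nonempty (S × S) with hE | hNE
      · exact ⟨(t + 1) / 2, by linarith, by linarith,
          fun s _ _ p _ => (hE.false p).elim⟩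
      · refine ⟨Finset.univ.inf' Finset.univ_nonempty g, ?_, ?_, ?_⟩
        · rw [Finset.lt_inf'_iff]
          exact fun p _ => (hg1 p).1
        · obtain ⟨p⟩ := hNE
          exact (Finset.inf'_le g (Finset.mem_univ p)).trans (hg1 p).2
        · intro s hs hs0 p hp
          by_contra hc
          have hle : s ≤ g p := hs0.trans (Finset.inf'_le g (Finset.mem_univ p))
          have hmem : p ∈ gradedBisimilarity δ (g p) :=
            gb_mono δ ⟨(ht.1.trans_lt hs).le, hle.trans (hg1 p).2⟩
              ⟨(ht.1.trans_lt (hg1 p).1).le, (hg1 p).2⟩ hle hp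
          exact (hg2 p hc) hmem
    obtain ⟨s₀, hs₀1, hs₀2, hs₀3⟩ := hkey
    have main : ∀ s, t < s → s ≤ s₀ →
        fmass (δ u a) X ≤ fmass (δ v a) (relImg (gbClosure δ t) X) + s ∧
        fmass (δ v a) X ≤ fmass (δ u a) (relImg (gbClosure δ t) X) + s := by
      intro s hs hss
      have hsI : s ∈ Set.Icc (0:ℝ) 1 := ⟨(ht.1.trans_lt hs).le, hss.trans hs₀2⟩
      have hmem : (u, v) ∈ gradedBisimilarity δ s := huv s hs (hss.trans hs₀2)
      obtain ⟨c1, c2⟩ := gb_cond δ hδ hsI hmem a X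
      have m1 := fmass_mono (fun w => (hδ v).1 a w) (relImg_mono (hs₀3 s hs hss) X)
      have m2 := fmass_mono (fun w => (hδ u).1 a w) (relImg_mono (hs₀3 s hs hss) X)
      exact ⟨c1.trans (add_le_add m1 le_rfl), c2.trans (add_le_add m2 le_rfl)⟩
    constructor
    · refine le_of_forall_pos_le_add fun ε hε => ?_
      have h := (main (min s₀ (t + ε)) (lt_min hs₀1 (by linarith)) (min_le_left _ _)).1
      have hle := min_le_right s₀ (t + ε)
      linarith
    · refine le_of_forall_pos_le_add fun ε hε => ?_
      have h := (main (min s₀ (t + ε)) (lt_min hs₀1 (by linarith)) (min_le_left _ _)).2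
      have hle := min_le_right s₀ (t + ε)
      linarith

lemma gb_closed (hδ : ∀ s, IsSubdist (fun a => δ s a)) {r : ℝ} {p : S × S}
    (h : ∀ s, r < s → s ≤ 1 → p ∈ gradedBisimilarity δ s) :
    p ∈ gradedBisimilarity δ r :=
  ⟨gbClosure δ, gbClosure_isBisim δ hδ, h⟩

end Aux4

def rClosure {S : Type*} (d : S → S → ℝ) (t : ℝ) : Set (S × S) :=
  {p | ∀ s, t < s → s ≤ 1 → d p.1 p.2 ≤ s}

section Aux5
set_option linter.unusedSectionVars false
variable {S A : Type*} [Fintype S] (δ : S → A → S → ℝ)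

lemma rClosure_isBisim (hδ : ∀ s, IsSubdist (fun a => δ s a)) {d : S → S → ℝ}
    (hd : IsMetBisim (A := A) δ d) : IsGradedBisimLMP δ (rClosure d) := by
  constructor
  · intro t t' _ _ hle p hp s hs hs1
    exact hp s (hle.trans_lt hs) hs1
  · intro r hr x y hxy a X
    rcases eq_or_lt_of_le hr.2 with h1 | h1
    · exact ⟨cond_triv δ hδ h1.ge x y a X _, cond_triv δ hδ h1.ge y x a X _⟩
    have hdxy : d x y ≤ r := by
      refine le_of_forall_pos_le_add fun ε hε => ?_
      have h := hxy (min (r + ε) 1) (lt_min (by linarith) h1) (min_le_right _ _)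
      have := min_le_left (r + ε) 1
      linarith
    have hLP : LPlift d (fun a => δ x a) (fun a => δ y a) ≤ r := (hd.2 x y).trans hdxy
    obtain ⟨ε₀, hε₀, hε₀1, hgap⟩ := gap_lemma d h1
    have main : ∀ ε > (0:ℝ),
        fmass (δ x a) X ≤ fmass (δ y a) (relImg (rClosure d r) X) + r + ε ∧
        fmass (δ y a) X ≤ fmass (δ x a) (relImg (rClosure d r) X) + r + ε := by
      intro ε hε
      set η := min ε ε₀ with hη
      have hη0 : 0 < η := lt_min hε hε₀
      have hηε₀ : η ≤ ε₀ := min_le_right _ _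
      have hηε : η ≤ ε := min_le_left _ _
      have hlt : LPlift d (fun a => δ x a) (fun a => δ y a) < r + η := by linarith
      unfold LPlift at hlt
      obtain ⟨t, htmem, htlt⟩ := exists_lt_of_csInf_lt ⟨(1:ℝ), Or.inr rfl⟩ hlt
      rcases htmem with ⟨htI, hcond⟩ | ht1
      · obtain ⟨c1, c2⟩ := hcond a X
        have hsub : Rmap d t ⊆ rClosure d r := by
          intro p hp s hs _
          have hdp : d p.1 p.2 ≤ r := hgap p (lt_of_le_of_lt hp (by linarith))
          linarith
        have m1 := fmass_mono (fun w => (hδ y).1 a w) (relImg_mono hsub X)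
        have m2 := fmass_mono (fun w => (hδ x).1 a w) (relImg_mono hsub X)
        constructor
        · linarith
        · linarith
      · rw [Set.mem_singleton_iff] at ht1
        rw [ht1] at htlt
        linarith
    constructor
    · refine le_of_forall_pos_le_add fun ε hε => ?_
      have := (main ε hε).1
      linarith
    · refine le_of_forall_pos_le_add fun ε hε => ?_
      have := (main ε hε).2
      linarith

lemma Rmap_subset_gb (hδ : ∀ s, IsSubdist (fun a => δ s a)) {d : S → S → ℝ}
    (hd : IsMetBisim (A := A) δ d) (r : ℝ) :
    Rmap d r ⊆ gradedBisimilarity δ r :=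
  fun p hp => ⟨rClosure d, rClosure_isBisim δ hδ hd, fun s hs _ => hp.trans hs.le⟩

lemma Lmap_Rmap {X : Type*} {d : X → X → ℝ} (hd : IsPMet1 d) (x y : X) :
    Lmap (Rmap d) x y = d x y := by
  obtain ⟨h0, h1, _, _, _⟩ := hd
  apply le_antisymm
  · exact csInf_le (Lmap_bddBelow _ x y) (Or.inl ⟨⟨h0 x y, h1 x y⟩, le_refl (d x y)⟩)
  · apply le_csInf ⟨(1:ℝ), Or.inr rfl⟩
    rintro r (⟨_, hr⟩ | rfl)
    · exact hr
    · exact h1 x y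

end Aux5

section Aux6
set_option linter.unusedSectionVars false
set_option linter.unusedVariables false
variable {S A : Type*} [Fintype S] (δ : S → A → S → ℝ)

lemma gb_mem_Lmap (hδ : ∀ s, IsSubdist (fun a => δ s a)) (x y : S) :
    (x, y) ∈ gradedBisimilarity δ (Lmap (gradedBisimilarity δ) x y) := by
  rcases eq_or_lt_of_le (Lmap_le_one (gradedBisimilarity δ) x y) with h | h
  · rw [h]
    exact gb_one δ hδ _
  · apply gb_closed δ hδ
    intro s hs hs1
    have hs' : Lmap (gradedBisimilarity δ) x y < s := hs
    unfold Lmap at hs'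
    obtain ⟨t, htmem, htlt⟩ := exists_lt_of_csInf_lt ⟨(1:ℝ), Or.inr rfl⟩ hs'
    rcases htmem with ⟨htI, hmem⟩ | ht1
    · exact gb_mono δ htI ⟨htI.1.trans htlt.le, hs1⟩ htlt.le hmem
    · rw [Set.mem_singleton_iff] at ht1
      rw [ht1] at htlt
      linarith

lemma Lstar_isMetBisim (hδ : ∀ s, IsSubdist (fun a => δ s a)) :
    IsMetBisim (A := A) δ (Lmap (gradedBisimilarity δ)) := by
  have hsymm : ∀ u v : S,
      Lmap (gradedBisimilarity δ) u v ≤ Lmap (gradedBisimilarity δ) v u := by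
    intro u v
    apply le_csInf ⟨(1:ℝ), Or.inr rfl⟩
    rintro r (⟨hrI, hmem⟩ | rfl)
    · exact Lmap_le_of_mem _ hrI (gb_symm δ hδ hmem)
    · exact Lmap_le_one _ _ _
  constructor
  · refine ⟨fun x y => Lmap_nonneg _ _ _, fun x y => Lmap_le_one _ _ _, ?_, ?_, ?_⟩
    · intro x
      refine le_antisymm ?_ (Lmap_nonneg _ _ _)
      refine Lmap_le_of_mem _ ⟨le_refl (0:ℝ), zero_le_one⟩ ?_
      refine ⟨fun _ => {p : S × S | p.1 = p.2}, ⟨fun _ _ _ _ _ => subset_rfl, ?_⟩, rfl⟩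
      intro r hrI u v huv a X
      have hXsub : X ⊆ relImg {p : S × S | p.1 = p.2} X := fun w hw => ⟨w, hw, rfl⟩
      have huv' : u = v := huv
      subst huv'
      have m := fmass_mono (fun w => (hδ u).1 a w) hXsub
      constructor <;> linarith [hrI.1]
    · intro x y
      exact le_antisymm (hsymm x y) (hsymm y x)
    · intro x y z
      have hxy := gb_mem_Lmap δ hδ x y
      have hyz := gb_mem_Lmap δ hδ y z
      have h0xy := Lmap_nonneg (gradedBisimilarity δ) x y
      have h1xy := Lmap_le_one (gradedBisimilarity δ) x y
      have h0yz := Lmap_nonneg (gradedBisimilarity δ) y z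
      have h1yz := Lmap_le_one (gradedBisimilarity δ) y z
      have hcomp := gb_comp δ hδ ⟨h0xy, h1xy⟩ ⟨h0yz, h1yz⟩ hxy hyz
      have hle := Lmap_le_of_mem (gradedBisimilarity δ)
        ⟨le_min zero_le_one (by linarith), min_le_left _ _⟩ hcomp
      have := min_le_right (1:ℝ)
        (Lmap (gradedBisimilarity δ) x y + Lmap (gradedBisimilarity δ) y z)
      linarith
  · intro x y
    have hu0 := Lmap_nonneg (gradedBisimilarity δ) x y
    have hu1 := Lmap_le_one (gradedBisimilarity δ) x y
    unfold LPlift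
    refine csInf_le ⟨0, ?_⟩ (Or.inl ⟨⟨hu0, hu1⟩, ?_⟩)
    · rintro r (⟨⟨h0, _⟩, _⟩ | rfl)
      · exact h0
      · norm_num
    · intro a X
      obtain ⟨c1, c2⟩ := gb_cond δ hδ ⟨hu0, hu1⟩ (gb_mem_Lmap δ hδ x y) a X
      have hsub : gradedBisimilarity δ (Lmap (gradedBisimilarity δ) x y) ⊆
          Rmap (Lmap (gradedBisimilarity δ)) (Lmap (gradedBisimilarity δ) x y) :=
        fun p hp => Lmap_le_of_mem _ ⟨hu0, hu1⟩ hp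
      have m1 := fmass_mono (fun w => (hδ y).1 a w) (relImg_mono hsub X)
      have m2 := fmass_mono (fun w => (hδ x).1 a w) (relImg_mono hsub X)
      constructor <;> linarith

end Aux6

/-- On a finite LMP, `L` maps metric bisimilarity to graded bisimilarity. -/
theorem metric_and_graded_bisimilarity {S A : Type*} [Fintype S]
    (δ : S → A → S → ℝ) (hδ : ∀ s, IsSubdist (fun a => δ s a)) :
    (∀ d : S → S → ℝ, IsMetBisim (A := A) δ d →
      (∀ x y, Lmap (Rmap d) x y = d x y) ∧
      (∀ r ∈ Set.Icc (0:ℝ) 1, Rmap d r ⊆ gradedBisimilarity (A := A) δ r)) ∧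
    (∀ x y : S, metBisimilarity (A := A) δ x y =
      Lmap (gradedBisimilarity (A := A) δ) x y) := by
  constructor
  · intro d hd
    exact ⟨fun x y => Lmap_Rmap hd.1 x y, fun r _ => Rmap_subset_gb δ hδ hd r⟩
  · intro x y
    apply le_antisymm
    · refine csInf_le ⟨0, ?_⟩ ⟨Lmap (gradedBisimilarity δ), Lstar_isMetBisim δ hδ, rfl⟩
      rintro t ⟨d, hd, rfl⟩
      exact hd.1.1 x y
    · refine le_csInf ⟨Lmap (gradedBisimilarity δ) x y,
        Lmap (gradedBisimilarity δ), Lstar_isMetBisim δ hδ, rfl⟩ ?_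
      rintro t ⟨d, hd, rfl⟩
      exact Lmap_le_of_mem _ ⟨hd.1.1 x y, hd.1.2.1 x y⟩
        (Rmap_subset_gb δ hδ hd (d x y) (le_refl (d x y)))
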